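/- arXiv:1911.05508 — 5 statements merged into one kernel-verified Lean document; each statement's English description precedes it below -/
import Mathlib

section
/- Under the assumptions of the previous statement, the linear system (B₁ − ε_S L) Y = Λ, with Λ = (Λ₁,…,Λₙ)ᵀ having positive entries, admits a unique solution Y; consequently the coupled SICA network admits a unique disease-free equilibrium (equilibrium with Iⱼ = Cⱼ = Aⱼ = 0 for all j). -/
open Matrix Finset

theorem unique_disease_free_equilibrium {n : ℕ} (L : Matrix (Fin n) (Fin n) ℝ)
    (hoff : ∀ j k, j ≠ k → 0 ≤ L j k)
    (hdiag : ∀ j, L j j = -∑ k ∈ Finset.univ.filter (· ≠ j), L k j)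
    (εS : ℝ) (hεS : 0 < εS) (μ : Fin n → ℝ) (hμ : ∀ j, 0 < μ j)
    (Λ : Fin n → ℝ) (hΛ : ∀ j, 0 < Λ j) :
    (∃! Y : Fin n → ℝ, (Matrix.diagonal μ - εS • L).mulVec Y = Λ) ∧
    (∃! S : Fin n → ℝ, ∀ j, μ j * S j - εS * ∑ k, L j k * S k = Λ j) := by
  set M : Matrix (Fin n) (Fin n) ℝ := Matrix.diagonal μ - εS • L with hM
  have hsum : ∀ k, ∑ i ∈ Finset.univ.erase k, L i k =
      ∑ i ∈ Finset.univ.filter (· ≠ k), L i k := by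
    intro k; rw [Finset.filter_ne']
  have hMkk : ∀ k, M k k = μ k + εS * ∑ i ∈ Finset.univ.erase k, L i k := by
    intro k
    simp only [hM, Matrix.sub_apply, Matrix.smul_apply, Matrix.diagonal_apply_eq,
      smul_eq_mul, hdiag k, hsum k]
    ring
  have hsumnn : ∀ k, 0 ≤ ∑ i ∈ Finset.univ.erase k, L i k := by
    intro k
    exact Finset.sum_nonneg fun i hi => hoff i k (Finset.ne_of_mem_erase hi)
  have hdet : IsUnit M.det := by
    rw [isUnit_iff_ne_zero]
    apply det_ne_zero_of_sum_col_lt_diag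
    intro k
    have h1 : ∑ i ∈ Finset.univ.erase k, ‖M i k‖ =
        εS * ∑ i ∈ Finset.univ.erase k, L i k := by
      rw [Finset.mul_sum]
      apply Finset.sum_congr rfl
      intro i hi
      have hne := Finset.ne_of_mem_erase hi
      simp only [hM, Matrix.sub_apply, Matrix.smul_apply,
        Matrix.diagonal_apply_ne _ hne, smul_eq_mul]
      rw [Real.norm_eq_abs, abs_of_nonpos (by nlinarith [hoff i k hne])]
      ring
    have h2 : ‖M k k‖ = μ k + εS * ∑ i ∈ Finset.univ.erase k, L i k := by
      rw [hMkk k, Real.norm_eq_abs, abs_of_pos]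
      nlinarith [hsumnn k, hμ k]
    rw [h1, h2]
    linarith [hμ k]
  have hU : IsUnit M := (Matrix.isUnit_iff_isUnit_det M).2 hdet
  have hinv : Invertible M := M.invertibleOfIsUnitDet hdet
  have huniq : ∃! Y : Fin n → ℝ, M.mulVec Y = Λ := by
    refine ⟨M⁻¹.mulVec Λ, ?_, ?_⟩
    · show M *ᵥ (M⁻¹ *ᵥ Λ) = Λ
      rw [Matrix.mulVec_mulVec, Matrix.mul_nonsing_inv M hdet, Matrix.one_mulVec]
    · intro y hy
      have := Matrix.mulVec_injective_of_invertible M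
      apply this
      rw [hy, Matrix.mulVec_mulVec, Matrix.mul_nonsing_inv M hdet, Matrix.one_mulVec]
  have hequiv : ∀ S : Fin n → ℝ,
      (∀ j, μ j * S j - εS * ∑ k, L j k * S k = Λ j) ↔ M.mulVec S = Λ := by
    intro S
    rw [funext_iff]
    apply forall_congr'
    intro j
    have : M.mulVec S j = μ j * S j - εS * ∑ k, L j k * S k := by
      simp only [hM, Matrix.mulVec, dotProduct, Matrix.sub_apply,
        Matrix.smul_apply, smul_eq_mul, sub_mul, Finset.sum_sub_distrib,
        Finset.mul_sum]
      congr 1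
      · rw [Finset.sum_eq_single j]
        · simp
        · intro b _ hb; simp [Matrix.diagonal_apply_ne' _ hb]
        · simp
      · apply Finset.sum_congr rfl; intro k _; ring
    rw [this]
  constructor
  · exact huniq
  · obtain ⟨Y, hY, hYu⟩ := huniq
    exact ⟨Y, (hequiv Y).2 hY, fun s hs => hYu s ((hequiv s).1 hs)⟩
end

section
/- For the SICA model with positive parameters, if R₀ = (Λ/μ)·(N/D) < 1 where N = β[ξ₂(ξ₁ + ρη_A) + η_C φ ξ₁] and D = μ[ξ₂(ρ + ξ₁) + φξ₁ + ρd] + ρωd, with ξ₁ = α+μ+d, ξ₂ = ω+μ, then along any solution staying in the region {S+I+C+A ≤ Λ/μ, all components ≥ 0}, the function V = k₁ I + k₂ C + k₃ A with k₁ = ξ₁ξ₂ + ξ₁φη_C + ξ₂ρη_A, k₂ = ξ₁ω + ξ₁ξ₃η_C + ρη_Aω − η_Cρα, k₃ = αξ₂ + ξ₂ξ₃η_A + φη_Cα − φη_Aω (ξ₃ = ρ+φ+μ) has nonpositive orbital derivative, i.e. \dot V ≤ 0, with \dot V = 0 iff I = C = A = 0. -/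
/-!
Substituting the weights `k₁, k₂, k₃`, the orbital derivative factors as
`V̇ = (N S - D) (I + η_C C + η_A A)`. In the invariant region `S ≤ Λ/μ`, so
`N S ≤ (Λ/μ) N = R₀ D < D` and the first factor is negative, while the second is a combination of
`I, C, A ≥ 0` with positive weights, vanishing only at `I = C = A = 0`.
-/

theorem sica_orbital_derivative_eq
    (β ηC ηA μ ρ φ ω α d ξ₁ ξ₂ ξ₃ N D k₁ k₂ k₃ S I C A : ℝ)
    (hξ₁ : ξ₁ = α + μ + d) (hξ₂ : ξ₂ = ω + μ) (hξ₃ : ξ₃ = ρ + φ + μ)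
    (hN : N = β * (ξ₂ * (ξ₁ + ρ * ηA) + ηC * φ * ξ₁))
    (hD : D = μ * (ξ₂ * (ρ + ξ₁) + φ * ξ₁ + ρ * d) + ρ * ω * d)
    (hk₁ : k₁ = ξ₁ * ξ₂ + ξ₁ * φ * ηC + ξ₂ * ρ * ηA)
    (hk₂ : k₂ = ξ₁ * ω + ξ₁ * ξ₃ * ηC + ρ * ηA * ω - ηC * ρ * α)
    (hk₃ : k₃ = α * ξ₂ + ξ₂ * ξ₃ * ηA + φ * ηC * α - φ * ηA * ω) :
    k₁ * (β * (I + ηC * C + ηA * A) * S - ξ₃ * I + ω * C + α * A)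
        + k₂ * (φ * I - ξ₂ * C) + k₃ * (ρ * I - ξ₁ * A)
      = (N * S - D) * (I + ηC * C + ηA * A) := by
  subst hξ₁ hξ₂ hξ₃ hN hD hk₁ hk₂ hk₃
  ring

theorem mul_sub_neg_of_mul_div_lt_one {K N D S : ℝ} (hN : 0 ≤ N) (hD : 0 < D) (hS : S ≤ K)
    (hR : K * (N / D) < 1) : N * S - D < 0 := by
  rw [← mul_div_assoc, div_lt_one hD] at hR
  nlinarith

theorem add_mul_add_mul_eq_zero_iff {a b x y z : ℝ} (ha : 0 < a) (hb : 0 < b)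
    (hx : 0 ≤ x) (hy : 0 ≤ y) (hz : 0 ≤ z) :
    x + a * y + b * z = 0 ↔ x = 0 ∧ y = 0 ∧ z = 0 := by
  rw [add_eq_zero_iff_of_nonneg (by positivity) (by positivity),
    add_eq_zero_iff_of_nonneg hx (by positivity)]
  simp [ha.ne', hb.ne', and_assoc]

theorem sica_lyapunov_nonpos_general
    (Λ β ηC ηA μ ρ φ ω α d : ℝ)
    (hβ : 0 < β) (hηC : 0 < ηC) (hηA : 0 < ηA) (hμ : 0 < μ)
    (hρ : 0 < ρ) (hφ : 0 < φ) (hω : 0 < ω) (hα : 0 < α) (hd : 0 < d)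
    -- abbreviations
    (ξ₁ ξ₂ ξ₃ N D k₁ k₂ k₃ : ℝ)
    (hξ₁ : ξ₁ = α + μ + d) (hξ₂ : ξ₂ = ω + μ) (hξ₃ : ξ₃ = ρ + φ + μ)
    (hN : N = β * (ξ₂ * (ξ₁ + ρ * ηA) + ηC * φ * ξ₁))
    (hD : D = μ * (ξ₂ * (ρ + ξ₁) + φ * ξ₁ + ρ * d) + ρ * ω * d)
    (hk₁ : k₁ = ξ₁ * ξ₂ + ξ₁ * φ * ηC + ξ₂ * ρ * ηA)
    (hk₂ : k₂ = ξ₁ * ω + ξ₁ * ξ₃ * ηC + ρ * ηA * ω - ηC * ρ * α)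
    (hk₃ : k₃ = α * ξ₂ + ξ₂ * ξ₃ * ηA + φ * ηC * α - φ * ηA * ω)
    -- basic reproduction number below one
    (hR0 : Λ / μ * (N / D) < 1)
    -- a state in the invariant region
    (S I C A : ℝ) (hI : 0 ≤ I) (hC : 0 ≤ C) (hA : 0 ≤ A)
    (hΩ : S + I + C + A ≤ Λ / μ)
    -- orbital derivative of V = k₁ I + k₂ C + k₃ A along the SICA vector field
    (Vdot : ℝ)
    (hVdot : Vdot = k₁ * (β * (I + ηC * C + ηA * A) * S - ξ₃ * I + ω * C + α * A)
                  + k₂ * (φ * I - ξ₂ * C) + k₃ * (ρ * I - ξ₁ * A)) :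
    Vdot ≤ 0 ∧ (Vdot = 0 ↔ I = 0 ∧ C = 0 ∧ A = 0) := by
  have hfactor : Vdot = (N * S - D) * (I + ηC * C + ηA * A) :=
    hVdot.trans (sica_orbital_derivative_eq β ηC ηA μ ρ φ ω α d ξ₁ ξ₂ ξ₃ N D k₁ k₂ k₃ S I C A
      hξ₁ hξ₂ hξ₃ hN hD hk₁ hk₂ hk₃)
  subst hξ₁ hξ₂
  have hD0 : 0 < D := hD ▸ by positivity
  have hN0 : 0 ≤ N := hN ▸ by positivity
  have hneg : N * S - D < 0 := mul_sub_neg_of_mul_div_lt_one hN0 hD0 (by linarith) hR0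
  have hw : 0 ≤ I + ηC * C + ηA * A := by positivity
  rw [hfactor, ← add_mul_add_mul_eq_zero_iff hηC hηA hI hC hA]
  exact ⟨mul_nonpos_of_nonpos_of_nonneg hneg.le hw, by simp [hneg.ne]⟩

theorem sica_lyapunov_nonpos
    (Λ β ηC ηA μ ρ φ ω α d : ℝ)
    (hΛ : 0 < Λ) (hβ : 0 < β) (hηC : 0 < ηC) (hηA : 0 < ηA) (hμ : 0 < μ)
    (hρ : 0 < ρ) (hφ : 0 < φ) (hω : 0 < ω) (hα : 0 < α) (hd : 0 < d)
    -- abbreviations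
    (ξ₁ ξ₂ ξ₃ N D k₁ k₂ k₃ : ℝ)
    (hξ₁ : ξ₁ = α + μ + d) (hξ₂ : ξ₂ = ω + μ) (hξ₃ : ξ₃ = ρ + φ + μ)
    (hN : N = β * (ξ₂ * (ξ₁ + ρ * ηA) + ηC * φ * ξ₁))
    (hD : D = μ * (ξ₂ * (ρ + ξ₁) + φ * ξ₁ + ρ * d) + ρ * ω * d)
    (hk₁ : k₁ = ξ₁ * ξ₂ + ξ₁ * φ * ηC + ξ₂ * ρ * ηA)
    (hk₂ : k₂ = ξ₁ * ω + ξ₁ * ξ₃ * ηC + ρ * ηA * ω - ηC * ρ * α)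
    (hk₃ : k₃ = α * ξ₂ + ξ₂ * ξ₃ * ηA + φ * ηC * α - φ * ηA * ω)
    -- basic reproduction number below one
    (hR0 : Λ / μ * (N / D) < 1)
    -- a state in the invariant region
    (S I C A : ℝ) (hS : 0 ≤ S) (hI : 0 ≤ I) (hC : 0 ≤ C) (hA : 0 ≤ A)
    (hΩ : S + I + C + A ≤ Λ / μ)
    -- orbital derivative of V = k₁ I + k₂ C + k₃ A along the SICA vector field
    (Vdot : ℝ)
    (hVdot : Vdot = k₁ * (β * (I + ηC * C + ηA * A) * S - ξ₃ * I + ω * C + α * A)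
                  + k₂ * (φ * I - ξ₂ * C) + k₃ * (ρ * I - ξ₁ * A)) :
    Vdot ≤ 0 ∧ (Vdot = 0 ↔ I = 0 ∧ C = 0 ∧ A = 0) :=
  sica_lyapunov_nonpos_general Λ β ηC ηA μ ρ φ ω α d hβ hηC hηA hμ hρ hφ hω hα hd ξ₁ ξ₂ ξ₃ N D k₁ k₂
    k₃ hξ₁ hξ₂ hξ₃ hN hD hk₁ hk₂ hk₃ hR0 S I C A hI hC hA hΩ Vdot hVdot
end

section
/- For the n-node SICA network, if (Λ₀/μ₀)·(Nᵢ/Dᵢ) < 1 for every node i (where Λ₀ = Σⱼ Λⱼ, μ₀ = minⱼ μⱼ, and Nᵢ, Dᵢ are the node-i versions of the numerator and denominator of the basic reproduction number), then the function V = Σᵢ (k_{1,i} Iᵢ + k_{2,i} Cᵢ + k_{3,i} Aᵢ) has nonpositive derivative along every solution in Ω = {x ∈ (ℝ⁺)^{4n} : Σxⱼ ≤ Λ₀/μ₀}, and \dot V = 0 iff Iᵢ = Cᵢ = Aᵢ = 0 for all i. -/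
open Finset

theorem sica_network_lyapunov_nonpos {n : ℕ} [NeZero n]
    (Λ β ηC ηA μ ρ φ ω α d : Fin n → ℝ)
    (hΛ : ∀ i, 0 < Λ i) (hβ : ∀ i, 0 < β i) (hηC : ∀ i, 0 < ηC i)
    (hηA : ∀ i, 0 < ηA i) (hμ : ∀ i, 0 < μ i) (hρ : ∀ i, 0 < ρ i)
    (hφ : ∀ i, 0 < φ i) (hω : ∀ i, 0 < ω i) (hα : ∀ i, 0 < α i) (hd : ∀ i, 0 < d i)
    (Λ₀ μ₀ : ℝ) (hΛ₀ : Λ₀ = ∑ i, Λ i)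
    (hμ₀ : μ₀ = Finset.univ.inf' Finset.univ_nonempty μ)
    -- node-wise numerators and denominators of the basic reproduction numbers
    (N D : Fin n → ℝ)
    (hN : ∀ i, N i = β i * ((ω i + μ i) * ((α i + μ i + d i) + ρ i * ηA i)
            + ηC i * φ i * (α i + μ i + d i)))
    (hD : ∀ i, D i = μ i * ((ω i + μ i) * (ρ i + (α i + μ i + d i))
            + φ i * (α i + μ i + d i) + ρ i * d i) + ρ i * ω i * d i)
    -- smallness assumption on every node
    (hsmall : ∀ i, Λ₀ / μ₀ * (N i / D i) < 1)
    -- a state in the region Ω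
    (S I C A : Fin n → ℝ)
    (hS : ∀ i, 0 ≤ S i) (hI : ∀ i, 0 ≤ I i) (hC : ∀ i, 0 ≤ C i) (hA : ∀ i, 0 ≤ A i)
    (hΩ : ∑ i, (S i + I i + C i + A i) ≤ Λ₀ / μ₀)
    -- the orbital derivative of V = ∑ᵢ (k₁ᵢ Iᵢ + k₂ᵢ Cᵢ + k₃ᵢ Aᵢ)
    (Vdot : ℝ)
    (hVdot : Vdot = ∑ i, ((N i * I i * S i - D i * I i)
        + ηC i * (N i * C i * S i - D i * C i)
        + ηA i * (N i * A i * S i - D i * A i))) :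
    Vdot ≤ 0 ∧ (Vdot = 0 ↔ ∀ i, I i = 0 ∧ C i = 0 ∧ A i = 0) := by
  have hD0 : ∀ i, 0 < D i := by
    intro i; rw [hD i]
    have := hμ i; have := hω i; have := hρ i; have := hα i; have := hd i; have := hφ i
    positivity
  have hN0 : ∀ i, 0 < N i := by
    intro i; rw [hN i]
    have := hμ i; have := hω i; have := hρ i; have := hα i; have := hd i
    have := hφ i; have := hβ i; have := hηA i; have := hηC i
    positivity
  -- each S i ≤ Λ₀/μ₀
  have hSle : ∀ i, S i ≤ Λ₀ / μ₀ := by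
    intro i
    have h1 : S i ≤ ∑ j, (S j + I j + C j + A j) := by
      have h2 : S i + I i + C i + A i ≤ ∑ j, (S j + I j + C j + A j) :=
        Finset.single_le_sum (f := fun j => S j + I j + C j + A j)
          (fun j _ => by have := hS j; have := hI j; have := hC j; have := hA j; linarith)
          (Finset.mem_univ i)
      have := hI i; have := hC i; have := hA i; linarith
    linarith
  -- key negativity
  have hkey : ∀ i, N i * S i - D i < 0 := by
    intro i
    have h1 : Λ₀ / μ₀ * N i < D i := by
      have h := hsmall i
      rw [← mul_div_assoc] at h
      have := (div_lt_one (hD0 i)).mp h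
      linarith
    have h2 : N i * S i ≤ N i * (Λ₀ / μ₀) := by
      exact mul_le_mul_of_nonneg_left (hSle i) (hN0 i).le
    nlinarith
  set f : Fin n → ℝ := fun i => ((N i * I i * S i - D i * I i)
        + ηC i * (N i * C i * S i - D i * C i)
        + ηA i * (N i * A i * S i - D i * A i)) with hf
  have hfe : ∀ i, f i = (N i * S i - D i) * (I i + ηC i * C i + ηA i * A i) := by
    intro i; simp only [hf]; ring
  have hfnp : ∀ i ∈ Finset.univ, f i ≤ 0 := by
    intro i _
    rw [hfe i]
    have hnn : 0 ≤ I i + ηC i * C i + ηA i * A i := by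
      have := hI i; have := hC i; have := hA i
      have := (hηC i).le; have := (hηA i).le
      nlinarith
    exact mul_nonpos_of_nonpos_of_nonneg (hkey i).le hnn
  constructor
  · rw [hVdot]; exact Finset.sum_nonpos hfnp
  · rw [hVdot]
    rw [Finset.sum_eq_zero_iff_of_nonpos hfnp]
    constructor
    · intro h i
      have hi := h i (Finset.mem_univ i)
      rw [hfe i] at hi
      have hne : N i * S i - D i ≠ 0 := (hkey i).ne
      have hz : I i + ηC i * C i + ηA i * A i = 0 := by
        rcases mul_eq_zero.mp hi with h' | h'
        · exact absurd h' hne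
        · exact h'
      have := hI i; have := hC i; have := hA i
      have := hηC i; have := hηA i
      refine ⟨by nlinarith, by nlinarith, by nlinarith⟩
    · intro h i _
      obtain ⟨h1, h2, h3⟩ := h i
      rw [hfe i, h1, h2, h3]; ring
end

section
/- For the SICA model with positive parameters and R₀ > 1 (i.e. Λ N > μ D), the point (S*, I*, C*, A*) = (D/N, ξ₁ξ₂(ΛN − μD)/(DN), φξ₁(ΛN − μD)/(DN), ρξ₂(ΛN − μD)/(DN)) is an equilibrium of the system with all components strictly positive, and it is the unique equilibrium with I > 0. -/
theorem sica_endemic_equilibrium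
    (Λ β ηC ηA μ ρ φ ω α d : ℝ)
    (hΛ : 0 < Λ) (hβ : 0 < β) (hηC : 0 < ηC) (hηA : 0 < ηA) (hμ : 0 < μ)
    (hρ : 0 < ρ) (hφ : 0 < φ) (hω : 0 < ω) (hα : 0 < α) (hd : 0 < d)
    (ξ₁ ξ₂ N D : ℝ)
    (hξ₁ : ξ₁ = α + μ + d) (hξ₂ : ξ₂ = ω + μ)
    (hN : N = β * (ξ₂ * (ξ₁ + ρ * ηA) + ηC * φ * ξ₁))
    (hD : D = μ * (ξ₂ * (ρ + ξ₁) + φ * ξ₁ + ρ * d) + ρ * ω * d)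
    -- R₀ > 1
    (hR0 : μ * D < Λ * N)
    (Ss Is Cs As : ℝ)
    (hSs : Ss = D / N)
    (hIs : Is = ξ₁ * ξ₂ * (Λ * N - μ * D) / (D * N))
    (hCs : Cs = φ * ξ₁ * (Λ * N - μ * D) / (D * N))
    (hAs : As = ρ * ξ₂ * (Λ * N - μ * D) / (D * N)) :
    (0 < Ss ∧ 0 < Is ∧ 0 < Cs ∧ 0 < As) ∧
    (Λ - β * (Is + ηC * Cs + ηA * As) * Ss - μ * Ss = 0 ∧
     β * (Is + ηC * Cs + ηA * As) * Ss - (ρ + φ + μ) * Is + ω * Cs + α * As = 0 ∧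
     φ * Is - ξ₂ * Cs = 0 ∧
     ρ * Is - ξ₁ * As = 0) ∧
    (∀ S I C A : ℝ,
      Λ - β * (I + ηC * C + ηA * A) * S - μ * S = 0 →
      β * (I + ηC * C + ηA * A) * S - (ρ + φ + μ) * I + ω * C + α * A = 0 →
      φ * I - ξ₂ * C = 0 →
      ρ * I - ξ₁ * A = 0 →
      0 < I → S = Ss ∧ I = Is ∧ C = Cs ∧ A = As) := by
  have hξ₁p : 0 < ξ₁ := by rw [hξ₁]; linarith
  have hξ₂p : 0 < ξ₂ := by rw [hξ₂]; linarith
  have hNp : 0 < N := by rw [hN]; positivity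
  have hDp : 0 < D := by rw [hD]; positivity
  have hE : 0 < Λ * N - μ * D := by linarith
  have hNe : N ≠ 0 := ne_of_gt hNp
  have hDe : D ≠ 0 := ne_of_gt hDp
  have hξ₁e : ξ₁ ≠ 0 := ne_of_gt hξ₁p
  have hξ₂e : ξ₂ ≠ 0 := ne_of_gt hξ₂p
  -- key polynomial identities
  have hβsum : β * (ξ₁ * ξ₂ + ηC * (φ * ξ₁) + ηA * (ρ * ξ₂)) = N := by
    rw [hN]; ring
  have hkey : D = (ρ + φ + μ) * ξ₁ * ξ₂ - ω * φ * ξ₁ - α * ρ * ξ₂ := by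
    rw [hD, hξ₁, hξ₂]; ring
  -- force of infection at the equilibrium point
  have hsplit : Is + ηC * Cs + ηA * As
      = (ξ₁ * ξ₂ + ηC * (φ * ξ₁) + ηA * (ρ * ξ₂)) * ((Λ * N - μ * D) / (D * N)) := by
    rw [hIs, hCs, hAs]; ring
  have hforce_s : β * (Is + ηC * Cs + ηA * As) = (Λ * N - μ * D) / D := by
    rw [hsplit, ← mul_assoc, hβsum]
    field_simp
  refine ⟨⟨by rw [hSs]; positivity, by rw [hIs]; positivity,
    by rw [hCs]; positivity, by rw [hAs]; positivity⟩, ⟨?_, ?_, ?_, ?_⟩, ?_⟩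
  · rw [hforce_s, hSs]; field_simp; ring
  · have hdrain : (ρ + φ + μ) * Is - ω * Cs - α * As
        = D * ((Λ * N - μ * D) / (D * N)) := by
      rw [hIs, hCs, hAs, hkey]; ring
    rw [hforce_s, hSs]
    have : β * (Is + ηC * Cs + ηA * As) * Ss = 0 + (Λ * N - μ * D) / D * (D / N) := by
      rw [hforce_s, hSs]; ring
    have goal : (Λ * N - μ * D) / D * (D / N) - D * ((Λ * N - μ * D) / (D * N)) = 0 := by
      field_simp
      ring
    linarith [hdrain, goal]
  · rw [hIs, hCs]; ring
  · rw [hIs, hAs]; ring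
  · intro S I C A h1 h2 h3 h4 hI
    have hC : C = φ * I / ξ₂ := by field_simp; linarith
    have hA : A = ρ * I / ξ₁ := by field_simp; linarith
    have hsplit' : I + ηC * C + ηA * A
        = (ξ₁ * ξ₂ + ηC * (φ * ξ₁) + ηA * (ρ * ξ₂)) * (I / (ξ₁ * ξ₂)) := by
      rw [hC, hA]; field_simp
    have hforce : β * (I + ηC * C + ηA * A) = N * (I / (ξ₁ * ξ₂)) := by
      rw [hsplit', ← mul_assoc, hβsum]
    have hdrain' : (ρ + φ + μ) * I - ω * C - α * A = D * (I / (ξ₁ * ξ₂)) := by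
      rw [hC, hA, hkey]; field_simp
    have hfrac_pos : 0 < I / (ξ₁ * ξ₂) := by positivity
    have hNS : (N * S) * (I / (ξ₁ * ξ₂)) = D * (I / (ξ₁ * ξ₂)) := by
      have h2' : N * (I / (ξ₁ * ξ₂)) * S - (ρ + φ + μ) * I + ω * C + α * A = 0 := by
        rw [← hforce]; exact h2
      linear_combination h2' + hdrain'
    have hNSD : N * S = D := mul_right_cancel₀ (ne_of_gt hfrac_pos) hNS
    have hS : S = D / N := by rw [eq_div_iff hNe]; linarith [hNSD]
    have h1' : Λ - N * (I / (ξ₁ * ξ₂)) * (D / N) - μ * (D / N) = 0 := by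
      rw [← hforce, ← hS]; exact h1
    have hIeq : I * (D * N) = ξ₁ * ξ₂ * (Λ * N - μ * D) := by
      field_simp at h1'
      refine mul_left_cancel₀ hNe ?_
      linear_combination -N * h1'
    have hIval : I = ξ₁ * ξ₂ * (Λ * N - μ * D) / (D * N) := by
      rw [eq_div_iff (by positivity : D * N ≠ 0)]; exact hIeq
    refine ⟨hS.trans hSs.symm, hIval.trans hIs.symm, ?_, ?_⟩
    · rw [hC, hIval, hCs]; field_simp
    · rw [hA, hIval, hAs]; field_simp
end

section
/- In the asymmetric two-node SICA network, R_{0,2}(L_{2,1}) > R_{0,2}(0) for all L_{2,1} > 0; i.e., any positive directed coupling from node 1 to node 2 strictly increases the basic reproduction number of node 2 above its uncoupled value N₂Λ₂/(D₂μ₂). -/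
theorem lt_weighted_mean {a b s t : ℝ} (hba : b < a) (hs : 0 < s) (ht : 0 ≤ t) :
    b < (s * a + t * b) / (s + t) := by
  rw [lt_div_iff₀ (by positivity)]
  nlinarith

/-- For `L > 0` the bracket in `R_{0,2}(L)` is the mean of `Λ₁ + Λ₂` and `Λ₂` with weights
`εS * L` and `μ₁`, hence exceeds its value `Λ₂` at `L = 0`. -/
theorem coupling_increases_R02_general (Λ₁ Λ₂ μ₁ μ₂ εS N₂ D₂ : ℝ)
    (hΛ₁ : 0 < Λ₁) (hμ₁ : 0 < μ₁) (hμ₂ : 0 < μ₂)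
    (hεS : 0 < εS) (hN₂ : 0 < N₂) (hD₂ : 0 < D₂) :
    ∀ L : ℝ, 0 < L →
      N₂ / (D₂ * μ₂) * ((εS * (Λ₁ + Λ₂) * L + Λ₂ * μ₁) / (εS * L + μ₁))
        > N₂ * Λ₂ / (D₂ * μ₂) := by
  intro L hL
  have hmean : Λ₂ < (εS * L * (Λ₁ + Λ₂) + μ₁ * Λ₂) / (εS * L + μ₁) :=
    lt_weighted_mean (by linarith) (by positivity) hμ₁.le
  calc N₂ * Λ₂ / (D₂ * μ₂) = N₂ / (D₂ * μ₂) * Λ₂ := by ring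
    _ < N₂ / (D₂ * μ₂) * ((εS * L * (Λ₁ + Λ₂) + μ₁ * Λ₂) / (εS * L + μ₁)) :=
      mul_lt_mul_of_pos_left hmean (by positivity)
    _ = N₂ / (D₂ * μ₂) * ((εS * (Λ₁ + Λ₂) * L + Λ₂ * μ₁) / (εS * L + μ₁)) := by ring

theorem coupling_increases_R02 (Λ₁ Λ₂ μ₁ μ₂ εS N₂ D₂ : ℝ)
    (hΛ₁ : 0 < Λ₁) (hΛ₂ : 0 < Λ₂) (hμ₁ : 0 < μ₁) (hμ₂ : 0 < μ₂)
    (hεS : 0 < εS) (hN₂ : 0 < N₂) (hD₂ : 0 < D₂) :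
    ∀ L : ℝ, 0 < L →
      N₂ / (D₂ * μ₂) * ((εS * (Λ₁ + Λ₂) * L + Λ₂ * μ₁) / (εS * L + μ₁))
        > N₂ * Λ₂ / (D₂ * μ₂) :=
  coupling_increases_R02_general Λ₁ Λ₂ μ₁ μ₂ εS N₂ D₂ hΛ₁ hμ₁ hμ₂ hεS hN₂ hD₂
end
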